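/- Let s ∈ ℝ^N be a strong-decaying signal with decay factor p > 1, i.e., |s|_{(l)} ≥ p·|s|_{(l+1)} for 1 ≤ l ≤ N−1, with best K-term approximation s_K and tail s_K^c = s − s_K. Then ‖s_K^c‖₁ / (√K · ‖s‖₂) ≤ √((p+1)/(K(p−1))) · p^{−K}. -/

import Mathlib

open Matrix Finset

/-- The ℓ₂ norm of a finite real vector. -/
noncomputable def l2 {n : ℕ} (v : Fin n → ℝ) : ℝ := Real.sqrt (∑ i, (v i) ^ 2)

/-- The ℓ₁ norm of a finite real vector. -/
noncomputable def l1 {n : ℕ} (v : Fin n → ℝ) : ℝ := ∑ i, |v i|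

/-- A vector is `K`-sparse if it has at most `K` nonzero entries. -/
def IsSparse {n : ℕ} (K : ℕ) (v : Fin n → ℝ) : Prop :=
  ∃ S : Finset (Fin n), S.card ≤ K ∧ ∀ i ∉ S, v i = 0

/-- `A` satisfies the RIP of order `K` with constant `δ`. -/
def SatisfiesRIP {m n : ℕ} (A : Matrix (Fin m) (Fin n) ℝ) (K : ℕ) (δ : ℝ) : Prop :=
  ∀ v : Fin n → ℝ, IsSparse K v →
    (1 - δ) * (l2 v) ^ 2 ≤ (l2 (A.mulVec v)) ^ 2 ∧
      (l2 (A.mulVec v)) ^ 2 ≤ (1 + δ) * (l2 v) ^ 2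

/-- Spectral norm (ℓ₂ operator norm) of a matrix. -/
noncomputable def specNorm {m n : ℕ} (A : Matrix (Fin m) (Fin n) ℝ) : ℝ :=
  sSup {c | ∃ v : Fin n → ℝ, l2 v ≤ 1 ∧ c = l2 (A.mulVec v)}

/-- The matrix with the columns of `A` indexed by `S` kept and all other columns zeroed,
representing the column-submatrix `A_S`. -/
def colRestrict {m n : ℕ} (A : Matrix (Fin m) (Fin n) ℝ) (S : Finset (Fin n)) :
    Matrix (Fin m) (Fin n) ℝ := fun i j => if j ∈ S then A i j else 0

/-- `‖A‖₂^{(K)}`: the largest spectral norm over all `K`-column submatrices of `A`. -/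
noncomputable def subNorm {m n : ℕ} (A : Matrix (Fin m) (Fin n) ℝ) (K : ℕ) : ℝ :=
  sSup {c | ∃ S : Finset (Fin n), S.card = K ∧ c = specNorm (colRestrict A S)}

/-- The pseudo-inverse `(BᵀB)⁻¹Bᵀ` of a full-column-rank matrix `B`. -/
noncomputable def pinv {m k : ℕ} (B : Matrix (Fin m) (Fin k) ℝ) : Matrix (Fin k) (Fin m) ℝ :=
  (Bᵀ * B)⁻¹ * Bᵀ

/-- `sK` is a best `K`-term (ℓ₂) approximation of `s`. -/
def IsBestApprox {n : ℕ} (K : ℕ) (s sK : Fin n → ℝ) : Prop :=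
  IsSparse K sK ∧ ∀ t : Fin n → ℝ, IsSparse K t → l2 (s - sK) ≤ l2 (s - t)

/-- Embed a vector indexed by `Fin k` into `Fin n` along an injection `f` (zero elsewhere). -/
noncomputable def embedVec {k n : ℕ} (f : Fin k → Fin n) (w : Fin k → ℝ) : Fin n → ℝ :=
  fun j => ∑ i, if f i = j then w i else 0

/-!
Let `a i = |s i|`, so that `p * a (i + 1) ≤ a i`. Telescoping gives `(p - 1) ∑_{j ≥ i} a j ≤ p * a i`,
and peeling off the first term of a tail inductively upgrades this to
`(p - 1) (∑ a j)² ≤ (p + 1) ∑ (a j)²`: the cross term `2 a 0 ∑_{j ≥ 1} a j` is at most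
`2 (a 0)² / (p - 1)`. For the tail beyond `K`, combined with `a (K + j) ≤ p ^ (-K) * a j`, this gives
`‖s_K^c‖₁ ≤ √((p + 1) / (p - 1)) p ^ (-K) ‖s‖₂`.
-/

section GeometricDecay

variable {p : ℝ} {a : ℕ → ℝ}

theorem sub_one_mul_sum_range_le (hdec : ∀ i, p * a (i + 1) ≤ a i) (n : ℕ) :
    (p - 1) * ∑ i ∈ range n, a i ≤ p * (a 0 - a n) := by
  rw [← sum_range_sub', mul_sum, mul_sum]
  exact sum_le_sum fun i _ => by linarith [hdec i]

theorem sub_one_mul_sq_sum_range_le (hp : 0 ≤ p) (ha : ∀ i, 0 ≤ a i)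
    (hdec : ∀ i, p * a (i + 1) ≤ a i) (n : ℕ) :
    (p - 1) * (∑ i ∈ range n, a i) ^ 2 ≤ (p + 1) * ∑ i ∈ range n, a i ^ 2 := by
  induction n generalizing a with
  | zero => simp
  | succ n ih =>
    rw [sum_range_succ', sum_range_succ' (fun i => a i ^ 2)]
    set T := ∑ i ∈ range n, a (i + 1)
    have hrest := ih (fun i => ha (i + 1)) (fun i => hdec (i + 1))
    have hT : (p - 1) * T ≤ a 0 :=
      calc (p - 1) * T ≤ p * (a 1 - a (n + 1)) :=
            sub_one_mul_sum_range_le (a := fun i => a (i + 1)) (fun i => hdec (i + 1)) n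
        _ ≤ p * a 1 := mul_le_mul_of_nonneg_left (by linarith [ha (n + 1)]) hp
        _ ≤ a 0 := hdec 0
    nlinarith [mul_le_mul_of_nonneg_left hT (ha 0)]

theorem pow_mul_le_of_mul_succ_le (hp : 0 ≤ p) (hdec : ∀ i, p * a (i + 1) ≤ a i) (k i : ℕ) :
    p ^ k * a (k + i) ≤ a i := by
  induction k generalizing i with
  | zero => simp
  | succ k ih =>
    calc p ^ (k + 1) * a (k + 1 + i) = p ^ k * (p * a (k + (i + 1))) := by ring_nf
      _ ≤ p ^ k * a (k + i) := by
        rw [← add_assoc]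
        exact mul_le_mul_of_nonneg_left (hdec _) (pow_nonneg hp k)
      _ ≤ a i := ih i

theorem sq_pow_mul_sum_range_shift_le (hp : 0 ≤ p) (ha : ∀ i, 0 ≤ a i)
    (hdec : ∀ i, p * a (i + 1) ≤ a i) (k n : ℕ) :
    (p ^ k) ^ 2 * ∑ i ∈ range n, a (k + i) ^ 2 ≤ ∑ i ∈ range n, a i ^ 2 := by
  rw [mul_sum]
  refine sum_le_sum fun i _ => ?_
  rw [← mul_pow]
  have := pow_mul_le_of_mul_succ_le hp hdec k i
  exact pow_le_pow_left₀ (mul_nonneg (pow_nonneg hp k) (ha _)) this 2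

end GeometricDecay

section Magnitudes

variable {N : ℕ}

theorem l1_nonneg (v : Fin N → ℝ) : 0 ≤ l1 v := sum_nonneg fun i _ => abs_nonneg (v i)

theorem l2_nonneg (v : Fin N → ℝ) : 0 ≤ l2 v := Real.sqrt_nonneg _

-- Padded with zeros, so that the tail beyond any `K` is a sum over `range N`.
noncomputable def absSeq (s : Fin N → ℝ) (i : ℕ) : ℝ := if h : i < N then |s ⟨i, h⟩| else 0

theorem absSeq_nonneg (s : Fin N → ℝ) (i : ℕ) : 0 ≤ absSeq s i := by
  unfold absSeq; split <;> simp

theorem absSeq_of_le (s : Fin N → ℝ) {i : ℕ} (hi : N ≤ i) : absSeq s i = 0 :=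
  dif_neg (not_lt.mpr hi)

theorem mul_absSeq_succ_le {s : Fin N → ℝ} {p : ℝ}
    (hdecay : ∀ l : Fin N, ∀ hl : (l : ℕ) + 1 < N, |s l| ≥ p * |s ⟨(l : ℕ) + 1, hl⟩|) (i : ℕ) :
    p * absSeq s (i + 1) ≤ absSeq s i := by
  by_cases h : i + 1 < N
  · simp only [absSeq, dif_pos h, dif_pos (Nat.lt_of_succ_lt h)]
    exact hdecay ⟨i, _⟩ h
  · rw [absSeq_of_le s (not_lt.mp h), mul_zero]
    exact absSeq_nonneg s i

theorem l2_sq_eq_sum_absSeq (s : Fin N → ℝ) : l2 s ^ 2 = ∑ i ∈ range N, absSeq s i ^ 2 := by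
  rw [l2, Real.sq_sqrt (by positivity), ← Fin.sum_univ_eq_sum_range]
  simp [absSeq, sq_abs]

theorem l1_tail_eq_sum_absSeq (s : Fin N → ℝ) (K : ℕ) :
    l1 (fun i => if (i : ℕ) < K then 0 else s i) = ∑ j ∈ range N, absSeq s (K + j) := by
  set g : ℕ → ℝ := fun i => if i < K then 0 else absSeq s i
  have hg : l1 (fun i => if (i : ℕ) < K then 0 else s i) = ∑ i ∈ range N, g i := by
    rw [l1, ← Fin.sum_univ_eq_sum_range]
    refine sum_congr rfl fun i _ => ?_
    by_cases h : (i : ℕ) < K <;> simp [g, h, absSeq]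
  have hbeyond : ∑ j ∈ range K, g (N + j) = 0 :=
    sum_eq_zero fun j _ => by simp [g, absSeq_of_le s (Nat.le_add_right N j)]
  have hhead : ∑ j ∈ range K, g j = 0 :=
    sum_eq_zero fun j hj => if_pos (mem_range.mp hj)
  calc l1 (fun i => if (i : ℕ) < K then 0 else s i)
      = ∑ i ∈ range (N + K), g i := by rw [hg, sum_range_add, hbeyond, add_zero]
    _ = ∑ j ∈ range N, absSeq s (K + j) := by
      rw [add_comm, sum_range_add, hhead, zero_add]
      exact sum_congr rfl fun j _ => if_neg (by omega)

theorem pow_mul_l1_tail_le {s : Fin N → ℝ} {p : ℝ} (hp : 1 < p)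
    (hdecay : ∀ l : Fin N, ∀ hl : (l : ℕ) + 1 < N, |s l| ≥ p * |s ⟨(l : ℕ) + 1, hl⟩|) (K : ℕ) :
    p ^ K * l1 (fun i => if (i : ℕ) < K then 0 else s i) ≤ √((p + 1) / (p - 1)) * l2 s := by
  have hp0 : 0 ≤ p := by linarith
  have hp1 : 0 < p - 1 := by linarith
  have hdec := mul_absSeq_succ_le hdecay
  set S := ∑ j ∈ range N, absSeq s (K + j) ^ 2
  have htail : (l1 fun i => if (i : ℕ) < K then 0 else s i) ^ 2 ≤ (p + 1) / (p - 1) * S := by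
    rw [div_mul_eq_mul_div, le_div_iff₀ hp1, l1_tail_eq_sum_absSeq, mul_comm]
    exact sub_one_mul_sq_sum_range_le hp0 (fun i => absSeq_nonneg s (K + i))
      (fun i => hdec (K + i)) N
  have hshift : (p ^ K) ^ 2 * S ≤ l2 s ^ 2 := by
    rw [l2_sq_eq_sum_absSeq]
    exact sq_pow_mul_sum_range_shift_le hp0 (absSeq_nonneg s) hdec K N
  rw [← pow_le_pow_iff_left₀ (mul_nonneg (pow_nonneg hp0 K) (l1_nonneg _))
    (mul_nonneg (Real.sqrt_nonneg _) (l2_nonneg s)) two_ne_zero, mul_pow, mul_pow,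
    Real.sq_sqrt (div_nonneg (by linarith) hp1.le)]
  calc (p ^ K) ^ 2 * (l1 fun i => if (i : ℕ) < K then 0 else s i) ^ 2
      ≤ (p ^ K) ^ 2 * ((p + 1) / (p - 1) * S) := by gcongr
    _ = (p + 1) / (p - 1) * ((p ^ K) ^ 2 * S) := by ring
    _ ≤ (p + 1) / (p - 1) * l2 s ^ 2 := by gcongr

end Magnitudes

theorem stmt6_general {N : ℕ} (s : Fin N → ℝ) (p : ℝ) (hp : 1 < p)
    (hdecay : ∀ l : Fin N, ∀ hl : (l : ℕ) + 1 < N, |s l| ≥ p * |s ⟨(l : ℕ) + 1, hl⟩|)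
    (K : ℕ) (hK1 : 1 ≤ K) :
    l1 (fun i => if (i : ℕ) < K then 0 else s i) / (Real.sqrt K * l2 s) ≤
      Real.sqrt ((p + 1) / (K * (p - 1))) * p ^ (-(K : ℤ)) := by
  have hK : (0 : ℝ) < K := by exact_mod_cast hK1
  have hpK : 0 < p ^ K := pow_pos (by linarith) K
  have hsqrt : √((p + 1) / (K * (p - 1))) * √K = √((p + 1) / (p - 1)) := by
    rw [← Real.sqrt_mul (div_nonneg (by linarith) (mul_nonneg hK.le (by linarith)))]
    congr 1
    field_simp
  rw [_root_.zpow_neg, zpow_natCast]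
  refine div_le_of_le_mul₀ (mul_nonneg (Real.sqrt_nonneg _) (l2_nonneg s)) (by positivity) ?_
  calc l1 (fun i => if (i : ℕ) < K then 0 else s i)
      = (p ^ K)⁻¹ * (p ^ K * l1 fun i => if (i : ℕ) < K then 0 else s i) := by field_simp
    _ ≤ (p ^ K)⁻¹ * (√((p + 1) / (p - 1)) * l2 s) :=
      mul_le_mul_of_nonneg_left (pow_mul_l1_tail_le hp hdecay K) (inv_nonneg.mpr hpK.le)
    _ = √((p + 1) / (K * (p - 1))) * (p ^ K)⁻¹ * (√K * l2 s) := by rw [← hsqrt]; ring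

/-- For a strong-decaying signal, the relative ℓ₁ tail satisfies
`‖s_K^c‖₁/(√K‖s‖₂) ≤ √((p+1)/(K(p-1)))·p^{-K}`. -/
theorem stmt6 {N : ℕ} (s : Fin N → ℝ) (hs : s ≠ 0) (p : ℝ) (hp : 1 < p)
    (hdecay : ∀ l : Fin N, ∀ hl : (l : ℕ) + 1 < N, |s l| ≥ p * |s ⟨(l : ℕ) + 1, hl⟩|)
    (K : ℕ) (hK1 : 1 ≤ K) (hKN : K ≤ N) :
    l1 (fun i => if (i : ℕ) < K then 0 else s i) / (Real.sqrt K * l2 s) ≤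
      Real.sqrt ((p + 1) / (K * (p - 1))) * p ^ (-(K : ℤ)) :=
  stmt6_general s p hp hdecay K hK1
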